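/- arXiv:1505.01128 — 2 statements merged into one kernel-verified Lean document; each statement's English description precedes it below -/
import Mathlib

section
/- For every relation S ⊆ T×T, define T∞(S) := νR.(S⁻¹ ∪ S ∪ ↓R)*. Then T∞ is idempotent: T∞(T∞(S)) = T∞(S). -/
open Relation

/-- A signature: a type of function symbols together with an arity for each symbol. -/
structure Signature where
  Sym : Type
  ar : Sym → ℕ

/-- The polynomial functor whose final coalgebra is the set of (finite and infinite)
terms over the signature `Sg` and the set `X` of variables. -/
def TermF (Sg : Signature) (X : Type) : PFunctor.{0} :=
  ⟨X ⊕ Sg.Sym, fun a => Sum.rec (fun _ => Empty) (fun f => Fin (Sg.ar f)) a⟩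

/-- The set `T` of finite and infinite terms over `Sg` and `X`, defined coinductively
(as the final coalgebra, i.e. the M-type, of `TermF Sg X`). -/
def Tm (Sg : Signature) (X : Type) : Type := PFunctor.M (TermF Sg X)

variable {Sg : Signature} {X : Type}

/-- The term consisting of a single variable. -/
def Tm.var (x : X) : Tm Sg X := PFunctor.M.mk ⟨Sum.inl x, Empty.elim⟩

/-- The term `f(t₁,…,tₙ)` with root symbol `f` and arguments `args`. -/
def Tm.node (f : Sg.Sym) (args : Fin (Sg.ar f) → Tm Sg X) : Tm Sg X :=
  PFunctor.M.mk ⟨Sum.inr f, args⟩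

/-- One step of the corecursive definition of substitution:
`Sum.inl t` means `t` still has to be substituted, `Sum.inr t` means `t` is copied. -/
def substAux (σ : X → Tm Sg X) :
    (Tm Sg X ⊕ Tm Sg X) → (TermF Sg X) (Tm Sg X ⊕ Tm Sg X) := fun s =>
  match s with
  | Sum.inl t =>
    match PFunctor.M.dest t with
    | ⟨Sum.inl x, _⟩ =>
        ⟨(PFunctor.M.dest (σ x)).1, fun b => Sum.inr ((PFunctor.M.dest (σ x)).2 b)⟩
    | ⟨Sum.inr f, k⟩ => ⟨Sum.inr f, fun b => Sum.inl (k b)⟩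
  | Sum.inr t =>
      ⟨(PFunctor.M.dest t).1, fun b => Sum.inr ((PFunctor.M.dest t).2 b)⟩

/-- Application `tσ` of a substitution `σ : X → T` to a term `t`, defined corecursively. -/
def subst (σ : X → Tm Sg X) (t : Tm Sg X) : Tm Sg X :=
  PFunctor.M.corec (substAux σ) (Sum.inl t)

/-- `Occurs x t`: the variable `x` occurs in the term `t`. -/
inductive Occurs (x : X) : Tm Sg X → Prop
  | here {t : Tm Sg X} : t = Tm.var x → Occurs x t
  | deeper {t : Tm Sg X} {f : Sg.Sym} {args : Fin (Sg.ar f) → Tm Sg X}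
      (i : Fin (Sg.ar f)) : t = Tm.node f args → Occurs x (args i) → Occurs x t

/-- A term rewriting system over `Sg` and `X`: a set of rules `ℓ → r` such that
`ℓ` is not a variable and all variables of `r` occur in `ℓ`. -/
structure TRS (Sg : Signature) (X : Type) where
  rules : Set (Tm Sg X × Tm Sg X)
  lhs_not_var : ∀ l r, (l, r) ∈ rules → ∀ x : X, l ≠ Tm.var x
  vars_lhs : ∀ l r, (l, r) ∈ rules → ∀ x : X, Occurs x r → Occurs x l

/-- Relations on terms. -/
abbrev TRel (Sg : Signature) (X : Type) := Tm Sg X → Tm Sg X → Prop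

/-- The root step relation `→ε := {(ℓσ, rσ) | ℓ → r ∈ R, σ a substitution}`. -/
def RootStep (R : TRS Sg X) : TRel Sg X := fun s t =>
  ∃ l r, (l, r) ∈ R.rules ∧ ∃ σ : X → Tm Sg X, s = subst σ l ∧ t = subst σ r

/-- `StepAt Q p s t`: a `Q`-step at position `p`, i.e. `s = C[u]`, `t = C[v]` with
`(u,v) ∈ Q` and `C` a one-hole context whose hole is at position `p`. -/
inductive StepAt (Q : TRel Sg X) : List ℕ → Tm Sg X → Tm Sg X → Prop
  | here {s t : Tm Sg X} : Q s t → StepAt Q [] s t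
  | deeper {f : Sg.Sym} {ss ts : Fin (Sg.ar f) → Tm Sg X} (i : Fin (Sg.ar f))
      {p : List ℕ} : StepAt Q p (ss i) (ts i) → (∀ j, j ≠ i → ss j = ts j) →
      StepAt Q ((i : ℕ) :: p) (Tm.node f ss) (Tm.node f ts)

/-- The one-step rewrite relation `→` of a TRS: a root step applied inside a
one-hole context. -/
def Step (R : TRS Sg X) : TRel Sg X := fun s t => ∃ p, StepAt (RootStep R) p s t

/-- The lifting `↓R` of a relation `R`:
`↓R := {(f(s₁,…,sₙ), f(t₁,…,tₙ)) | f ∈ Σ, s₁ R t₁, …, sₙ R tₙ} ∪ Id`. -/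
def liftRel (R : TRel Sg X) : TRel Sg X := fun s t =>
  s = t ∨ ∃ (f : Sg.Sym) (ss ts : Fin (Sg.ar f) → Tm Sg X),
    s = Tm.node f ss ∧ t = Tm.node f ts ∧ ∀ i, R (ss i) (ts i)

lemma liftRel_mono : Monotone (liftRel (Sg := Sg) (X := X)) := by
  intro R S h s t hst
  rcases hst with h1 | ⟨f, ss, ts, rfl, rfl, hi⟩
  · exact Or.inl h1
  · exact Or.inr ⟨f, ss, ts, rfl, rfl, fun i => h _ _ (hi i)⟩

/-- Relational composition `r ∘ s`. -/
def relComp (r s : TRel Sg X) : TRel Sg X := fun a c => ∃ b, r a b ∧ s b c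

/-- The monotone operator `S ↦ (→ε ∪ ↓R)* ∘ ↓S` (for a fixed `R`). -/
def iredInnerHom (R : TRS Sg X) (U : TRel Sg X) : TRel Sg X →o TRel Sg X where
  toFun S := relComp
    (ReflTransGen (fun s t => RootStep R s t ∨ liftRel U s t)) (liftRel S)
  monotone' := by
    intro S S' h a c hac
    rcases hac with ⟨b, h1, h2⟩
    exact ⟨b, h1, liftRel_mono h _ _ h2⟩

/-- The monotone operator `R ↦ νS.((→ε ∪ ↓R)* ∘ ↓S)`. -/
def iredHom (R : TRS Sg X) : TRel Sg X →o TRel Sg X where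
  toFun U := OrderHom.gfp (iredInnerHom R U)
  monotone' := by
    intro U V h
    apply OrderHom.gfp.monotone
    intro S a c hac
    rcases hac with ⟨b, h1, h2⟩
    refine ⟨b, ?_, h2⟩
    exact ReflTransGen.mono (fun x y hxy => hxy.imp id (fun h' => liftRel_mono h _ _ h')) _ _ h1

/-- The infinitary rewrite relation `→∞ := μR.νS.((→ε ∪ ↓R)* ∘ ↓S)`. -/
def ired (R : TRS Sg X) : TRel Sg X := OrderHom.lfp (iredHom R)

/-- The monotone operator `R' ↦ (→ε ∪ ↓R')*`. -/
def biHom (R : TRS Sg X) : TRel Sg X →o TRel Sg X where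
  toFun U := ReflTransGen (fun s t => RootStep R s t ∨ liftRel U s t)
  monotone' := by
    intro U V h a b hab
    exact ReflTransGen.mono (fun x y hxy => hxy.imp id (fun h' => liftRel_mono h _ _ h')) _ _ hab

/-- The bi-infinite rewrite relation `∞→ := νR.(→ε ∪ ↓R)*`. -/
def bired (R : TRS Sg X) : TRel Sg X := OrderHom.gfp (biHom R)

/-- The monotone operator `R' ↦ (←ε ∪ →ε ∪ ↓R')*`. -/
def ieqHom (R : TRS Sg X) : TRel Sg X →o TRel Sg X where
  toFun U := ReflTransGen (fun s t => RootStep R t s ∨ RootStep R s t ∨ liftRel U s t)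
  monotone' := by
    intro U V h a b hab
    exact ReflTransGen.mono
      (fun x y hxy => hxy.imp id (fun h' => h'.imp id (fun h'' => liftRel_mono h _ _ h''))) _ _ hab

/-- The infinitary equational reasoning relation `=∞ := νR.(←ε ∪ →ε ∪ ↓R)*`. -/
def ieq (R : TRS Sg X) : TRel Sg X := OrderHom.gfp (ieqHom R)

/-- `Agree n s t`: the terms `s` and `t` coincide up to depth `n`
(i.e. `d(s,t) ≤ 2^{-n}` for the standard metric `d`). -/
def Agree : ℕ → Tm Sg X → Tm Sg X → Prop
  | 0, _, _ => True
  | n + 1, s, t =>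
      (∃ x : X, s = Tm.var x ∧ t = Tm.var x) ∨
      ∃ (f : Sg.Sym) (ss ts : Fin (Sg.ar f) → Tm Sg X),
        s = Tm.node f ss ∧ t = Tm.node f ts ∧ ∀ i, Agree n (ss i) (ts i)

/-- `ConvTo t p l tl`: as `β` approaches the ordinal `l` from below,
`d(t β, tl)` tends to `0` and the depth `|p β|` tends to infinity. -/
def ConvTo (t : Ordinal.{0} → Tm Sg X) (p : Ordinal.{0} → List ℕ) (l : Ordinal.{0})
    (tl : Tm Sg X) : Prop :=
  (∀ n : ℕ, ∃ β₀ < l, ∀ β, β₀ ≤ β → β < l → Agree n (t β) tl) ∧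
  (∀ n : ℕ, ∃ β₀ < l, ∀ β, β₀ ≤ β → β < l → n ≤ (p β).length)

/-- A transfinite sequence of `Q`-steps `(t_β →_{p_β} t_{β+1})_{β<α}` of ordinal
length `α`, weakly continuous and with depths tending to infinity at every limit
ordinal `λ < α`. -/
structure TransSeq (Q : TRel Sg X) (α : Ordinal.{0}) where
  t : Ordinal.{0} → Tm Sg X
  pos : Ordinal.{0} → List ℕ
  step : ∀ β < α, StepAt Q (pos β) (t β) (t (β + 1))
  conv : ∀ l < α, Order.IsSuccLimit l → ConvTo t pos l (t l)

/-- A transfinite rewrite sequence is strongly convergent if its length is a successor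
ordinal (or zero), or there exists a final term to which it converges (with depths
tending to infinity) at the limit. -/
def TransSeq.StronglyConvergent {Q : TRel Sg X} {α : Ordinal.{0}} (s : TransSeq Q α) : Prop :=
  Order.IsSuccLimit α → ∃ tl, ConvTo s.t s.pos α tl

/-- `SCRed Q s t`: there is a strongly convergent transfinite sequence of `Q`-steps
from `s` to `t`. -/
def SCRed (Q : TRel Sg X) : TRel Sg X := fun a b =>
  ∃ (α : Ordinal.{0}) (s : TransSeq Q α), s.t 0 = a ∧ s.t α = b ∧
    (Order.IsSuccLimit α → ConvTo s.t s.pos α b)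

/-- The standard, ordinal-based infinitary rewrite relation `→∞_ord`:
strongly convergent transfinite rewrite sequences. -/
def iredOrd (R : TRS Sg X) : TRel Sg X := SCRed (RootStep R)

-- auxiliary facts about the term constructors
lemma node_ne_var (f : Sg.Sym) (args : Fin (Sg.ar f) → Tm Sg X) (x : X) :
    Tm.node f args ≠ Tm.var x := by
  intro h
  have h1 := congrArg (fun u => (PFunctor.M.dest u).1) h
  simp only [Tm.node, Tm.var, PFunctor.M.dest_mk] at h1
  exact Sum.inr_ne_inl h1

lemma node_inj_sym {f g : Sg.Sym} {ss : Fin (Sg.ar f) → Tm Sg X}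
    {ts : Fin (Sg.ar g) → Tm Sg X} (h : Tm.node f ss = Tm.node g ts) : f = g := by
  have h1 := congrArg (fun u => (PFunctor.M.dest u).1) h
  simp only [Tm.node, PFunctor.M.dest_mk] at h1
  exact Sum.inr.inj h1

lemma node_inj_args {f : Sg.Sym} {ss ts : Fin (Sg.ar f) → Tm Sg X}
    (h : Tm.node f ss = Tm.node f ts) : ss = ts := by
  have h' : (PFunctor.M.mk ⟨Sum.inr f, ss⟩ : Tm Sg X) = PFunctor.M.mk ⟨Sum.inr f, ts⟩ := h
  have h1 := PFunctor.M.mk_inj h'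
  injection h1 with h2 h3

lemma var_inj {x y : X} (h : (Tm.var x : Tm Sg X) = Tm.var y) : x = y := by
  have h1 := congrArg (fun u => (PFunctor.M.dest u).1) h
  simp only [Tm.var, PFunctor.M.dest_mk] at h1
  exact Sum.inl.inj h1

lemma occurs_var_iff {x y : X} : Occurs x (Tm.var y : Tm Sg X) ↔ x = y := by
  constructor
  · intro h
    cases h with
    | here h => exact (var_inj h.symm)
    | deeper i h _ => exact absurd h.symm (node_ne_var _ _ _)
  · rintro rfl
    exact Occurs.here rfl

lemma occurs_node_iff {x : X} {f : Sg.Sym} {args : Fin (Sg.ar f) → Tm Sg X} :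
    Occurs x (Tm.node f args) ↔ ∃ i, Occurs x (args i) := by
  constructor
  · intro h
    cases h with
    | here h => exact absurd h (node_ne_var _ _ _)
    | deeper i h hocc =>
      obtain rfl := node_inj_sym h
      obtain rfl := node_inj_args h
      exact ⟨i, hocc⟩
  · rintro ⟨i, h⟩
    exact Occurs.deeper i rfl h

/-- The monotone operator `U ↦ (S⁻¹ ∪ S ∪ ↓U)*` (for a fixed relation `S`). -/
def TinfHom (S : TRel Sg X) : TRel Sg X →o TRel Sg X where
  toFun U := Relation.ReflTransGen (fun a b => S b a ∨ S a b ∨ liftRel U a b)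
  monotone' := by
    intro U V h a b hab
    exact ReflTransGen.mono
      (fun x y hxy => hxy.imp id (fun h' => h'.imp id (fun h'' => liftRel_mono h _ _ h''))) _ _ hab

/-- The closure operator `T∞(S) := νR.(S⁻¹ ∪ S ∪ ↓R)*`. -/
def Tinf (S : TRel Sg X) : TRel Sg X := OrderHom.gfp (TinfHom S)

lemma liftRel_flip {R : TRel Sg X} {a b : Tm Sg X} (h : liftRel R a b) : liftRel (flip R) b a := by
  rcases h with rfl | ⟨f, ss, ts, rfl, rfl, hi⟩
  · exact Or.inl rfl
  · exact Or.inr ⟨f, ts, ss, rfl, rfl, hi⟩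

lemma Tinf_eq_TinfHom (S : TRel Sg X) : Tinf S = TinfHom S (Tinf S) :=
  (OrderHom.map_gfp (TinfHom S)).symm

lemma le_Tinf (S : TRel Sg X) : S ≤ Tinf S :=
  OrderHom.le_gfp _ fun _ _ h => ReflTransGen.single (Or.inr (Or.inl h))

lemma Tinf_symm (S : TRel Sg X) {a b : Tm Sg X} (h : Tinf S a b) : Tinf S b a := by
  suffices flip (Tinf S) ≤ Tinf S from this _ _ h
  refine OrderHom.le_gfp _ fun a b hba => ?_
  rw [Tinf_eq_TinfHom] at hba
  refine ReflTransGen.mono ?_ _ _ (reflTransGen_swap.mpr hba)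
  rintro x y (hS | hS | hlift)
  · exact Or.inr (Or.inl hS)
  · exact Or.inl hS
  · exact Or.inr (Or.inr (liftRel_flip hlift))

lemma Tinf_le_TinfHom {S U : TRel Sg X} (h : Tinf S ≤ U) : Tinf S ≤ TinfHom S U :=
  (Tinf_eq_TinfHom S).trans_le ((TinfHom S).mono h)

/-- Coinduction: `T∞(T∞(S))` is a post-fixed point of `U ↦ (S⁻¹ ∪ S ∪ ↓U)*`, because every
`T∞(S)`-step already lies in `(S⁻¹ ∪ S ∪ ↓T∞(S))*` and `T∞(S) ⊆ T∞(T∞(S))`. -/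
lemma Tinf_Tinf_le (S : TRel Sg X) : Tinf (Tinf S) ≤ Tinf S := by
  have hSU : Tinf S ≤ TinfHom S (Tinf (Tinf S)) := Tinf_le_TinfHom (le_Tinf (Tinf S))
  refine OrderHom.le_gfp _ ((Tinf_eq_TinfHom (Tinf S)).trans_le (reflTransGen_closed ?_))
  rintro a b (hba | hab | hlift)
  · exact hSU _ _ (Tinf_symm S hba)
  · exact hSU _ _ hab
  · exact ReflTransGen.single (Or.inr (Or.inr hlift))

theorem Tinf_idem_general (Sg : Signature) (X : Type) (S : TRel Sg X) :
    Tinf (Tinf S) = Tinf S :=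
  le_antisymm (Tinf_Tinf_le S) (le_Tinf (Tinf S))

/-- The operator `T∞` is idempotent: `T∞(T∞(S)) = T∞(S)` for every
relation `S` on terms. -/
theorem Tinf_idem (Sg : Signature) (X : Type) [Infinite X] (S : TRel Sg X) :
    Tinf (Tinf S) = Tinf S :=
  Tinf_idem_general Sg X S
end

section
/- For every TRS R over a signature Σ, Kahrs's relation S_E(→) := ⋃_{n∈ℕ} (S∘E)ⁿ(→) is included in the infinitary equational reasoning relation: S_E(→) ⊆ =∞. -/
open Relation

variable {Sg : Signature} {X : Type}

/-- The `n`-fold iterate `(S∘E)ⁿ(→)` of the operator `Q ↦ S(E(Q))` applied to the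
one-step rewrite relation `→`, where `E` is equivalence closure and `S(Q)` is the
strongly convergent transfinite rewrite relation generated by `Q`-steps. -/
def SEiter (R : TRS Sg X) : ℕ → TRel Sg X
  | 0 => Step R
  | n + 1 => SCRed (Relation.EqvGen (SEiter R n))

/-- Kahrs's relation `S_E(→) := ⋃_{n∈ℕ} (S∘E)ⁿ(→)`. -/
def SERel (R : TRS Sg X) : TRel Sg X := fun s t => ∃ n, SEiter R n s t

/-!
Call `u` and `v` *projection-related* if some converging reduction of one of the relations
`E((S∘E)ⁿ(→))` carries `u`, sitting at a position `q` of an intermediate term, to `v` at `q` in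
its final term, with no step strictly above `q` in between. Transfinite induction on the length
of the reduction shows that projection-related terms are connected by root steps in both
directions and lifted projection-related pairs: successor steps are either root steps, steps
strictly below `q` (lifted single-step projections) or steps parallel to `q` (invisible), and at
a limit the subterm at `q` eventually has the root symbol of the limit, with the arguments
projection-related through positions `q ++ [i]`. Thus the equivalence generated by projection
is a post-fixed point of the functional defining `=∞`, and it contains every `(S∘E)ⁿ(→)`.
-/

lemma Tm.eq_var_or_eq_node (t : Tm Sg X) :
    (∃ x : X, t = Tm.var x) ∨
      ∃ (f : Sg.Sym) (args : Fin (Sg.ar f) → Tm Sg X), t = Tm.node f args := by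
  rcases h : PFunctor.M.dest t with ⟨a | f, k⟩
  all_goals have ht : t = PFunctor.M.mk ⟨_, k⟩ := by rw [← h]; exact (PFunctor.M.mk_dest _).symm
  · refine Or.inl ⟨a, ht.trans ?_⟩
    unfold Tm.var
    congr
    funext e
    exact Empty.elim e
  · exact Or.inr ⟨f, k, ht⟩

/-- The subterm of `t` at position `q`, or `none` if `q` is not a position of `t`. -/
def subtermAt : List ℕ → Tm Sg X → Option (Tm Sg X)
  | [], t => some t
  | i :: p, t =>
    match PFunctor.M.dest t with
    | ⟨Sum.inl _, _⟩ => none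
    | ⟨Sum.inr f, k⟩ => if h : i < Sg.ar f then subtermAt p (k ⟨i, h⟩) else none

@[simp] lemma subtermAt_nil (t : Tm Sg X) : subtermAt [] t = some t := rfl

@[simp] lemma subtermAt_cons_var (i : ℕ) (p : List ℕ) (x : X) :
    subtermAt (i :: p) (Tm.var x : Tm Sg X) = none := by
  simp only [subtermAt, Tm.var]; erw [PFunctor.M.dest_mk]

lemma subtermAt_cons_node (i : ℕ) (p : List ℕ) (f : Sg.Sym) (args : Fin (Sg.ar f) → Tm Sg X) :
    subtermAt (i :: p) (Tm.node f args) =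
      if h : i < Sg.ar f then subtermAt p (args ⟨i, h⟩) else none := by
  simp only [subtermAt, Tm.node]; erw [PFunctor.M.dest_mk]

@[simp] lemma subtermAt_cons_node_fin {f : Sg.Sym} (i : Fin (Sg.ar f)) (p : List ℕ)
    (args : Fin (Sg.ar f) → Tm Sg X) :
    subtermAt ((i : ℕ) :: p) (Tm.node f args) = subtermAt p (args i) := by
  rw [subtermAt_cons_node, dif_pos i.isLt]

lemma subtermAt_append (q q' : List ℕ) (t : Tm Sg X) :
    subtermAt (q ++ q') t = (subtermAt q t).bind (subtermAt q') := by
  induction q generalizing t with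
  | nil => rfl
  | cons a q ih =>
    rcases t.eq_var_or_eq_node with ⟨x, rfl⟩ | ⟨f, args, rfl⟩
    · simp
    · rw [List.cons_append, subtermAt_cons_node, subtermAt_cons_node]
      split
      · exact ih _
      · rfl

lemma Agree.symm : ∀ {n : ℕ} {s t : Tm Sg X}, Agree n s t → Agree n t s
  | 0, _, _, _ => trivial
  | _ + 1, _, _, Or.inl ⟨x, hs, ht⟩ => Or.inl ⟨x, ht, hs⟩
  | _ + 1, _, _, Or.inr ⟨f, ss, ts, hs, ht, hargs⟩ =>
    Or.inr ⟨f, ts, ss, ht, hs, fun i => (hargs i).symm⟩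

lemma Agree.exists_subtermAt {q : List ℕ} {n : ℕ} {s t u : Tm Sg X}
    (h : Agree (q.length + n) s t) (hu : subtermAt q s = some u) :
    ∃ v, subtermAt q t = some v ∧ Agree n u v := by
  induction q generalizing s t with
  | nil =>
    obtain rfl := Option.some.inj hu
    exact ⟨t, rfl, by simpa using h⟩
  | cons a q ih =>
    rw [List.length_cons, Nat.add_right_comm] at h
    rcases h with ⟨x, rfl, rfl⟩ | ⟨f, ss, ts, rfl, rfl, hargs⟩
    · simp at hu
    · rw [subtermAt_cons_node] at hu ⊢
      split at hu
      case isTrue hlt => simpa [dif_pos hlt] using ih (hargs ⟨a, hlt⟩) hu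
      case isFalse => simp at hu

lemma StepAt.exists_subtermAt_of_append {Q : TRel Sg X} {q p : List ℕ} {s t : Tm Sg X}
    (h : StepAt Q (q ++ p) s t) :
    ∃ u v, subtermAt q s = some u ∧ subtermAt q t = some v ∧ StepAt Q p u v := by
  induction q generalizing s t with
  | nil => exact ⟨s, t, rfl, rfl, h⟩
  | cons a q ih =>
    cases h with
    | deeper i hst _ => simpa using ih hst

lemma StepAt.subtermAt_eq_of_not_prefix {Q : TRel Sg X} {p : List ℕ} {s t : Tm Sg X}
    (h : StepAt Q p s t) {q : List ℕ} (hqp : ¬ q <+: p) (hpq : ¬ p <+: q) :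
    subtermAt q s = subtermAt q t := by
  induction h generalizing q with
  | here => exact absurd List.nil_prefix hpq
  | @deeper f ss ts i p' _ hoth ih =>
    obtain _ | ⟨a, q'⟩ := q
    · exact absurd List.nil_prefix hqp
    rw [subtermAt_cons_node, subtermAt_cons_node]
    split
    case isFalse => rfl
    case isTrue hlt =>
      by_cases hai : a = i
      · subst hai
        exact ih (fun hc => hqp (List.cons_prefix_cons.mpr ⟨rfl, hc⟩))
          (fun hc => hpq (List.cons_prefix_cons.mpr ⟨rfl, hc⟩))
      · rw [hoth _ (fun he => hai (congrArg Fin.val he))]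

lemma List.prefix_or_not_prefix_of_length_le {α : Type*} {a b : List α}
    (h : a.length ≤ b.length) : a <+: b ∨ ¬ b <+: a := by
  by_cases hba : b <+: a
  · exact Or.inl (hba.eq_of_length (le_antisymm hba.length_le h) ▸ List.prefix_refl a)
  · exact Or.inr hba

def TransSeq.restrict {Q : TRel Sg X} {α : Ordinal.{0}} (seq : TransSeq Q α)
    (β₁ : Ordinal.{0}) (h : β₁ ≤ α) : TransSeq Q β₁ where
  t := seq.t
  pos := seq.pos
  step := fun β hβ => seq.step β (hβ.trans_le h)
  conv := fun l hl => seq.conv l (hl.trans_le h)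

noncomputable def TransSeq.single {Q : TRel Sg X} {p : List ℕ} {u v : Tm Sg X}
    (h : StepAt Q p u v) : TransSeq Q 1 where
  t := fun β => if β = 0 then u else v
  pos := fun _ => p
  step := by
    intro β hβ
    obtain rfl := Order.lt_one_iff.mp hβ
    simpa using h
  conv := by
    intro l hl hlim
    obtain rfl := Order.lt_one_iff.mp hl
    exact absurd hlim Order.not_isSuccLimit_bot

lemma ConvTo.exists_subtermAt_agree {t : Ordinal.{0} → Tm Sg X} {pos : Ordinal.{0} → List ℕ}
    {α β₀ : Ordinal.{0}} {tl : Tm Sg X} (h : ConvTo t pos α tl) (hβ₀ : β₀ < α)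
    {q : List ℕ} {v : Tm Sg X} (hv : subtermAt q tl = some v) :
    ∃ β₁, β₀ ≤ β₁ ∧ β₁ < α ∧ (∀ β, β₁ ≤ β → β < α → q.length + 1 ≤ (pos β).length) ∧
      ∃ u, subtermAt q (t β₁) = some u ∧ Agree 1 u v := by
  obtain ⟨βa, hβa, ha⟩ := h.1 (q.length + 1)
  obtain ⟨βb, hβb, hb⟩ := h.2 (q.length + 1)
  refine ⟨max β₀ (max βa βb), le_max_left _ _, max_lt hβ₀ (max_lt hβa hβb),
    fun β hβ hβα => hb β (le_trans (by simp) hβ) hβα, ?_⟩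
  obtain ⟨u, hu, hagree⟩ :=
    (ha _ (by simp) (max_lt hβ₀ (max_lt hβa hβb))).symm.exists_subtermAt hv
  exact ⟨u, hu, hagree.symm⟩

/-- `ProjRed Q u v`: in some `Q`-reduction that converges to its final term, `u` is the subterm
at `q` of the term at stage `β₀` and `v` the subterm at `q` of the final term, and from stage
`β₀` on no step takes place strictly above `q`. -/
def ProjRed (Q : TRel Sg X) : TRel Sg X := fun u v =>
  ∃ (α : Ordinal.{0}) (seq : TransSeq Q α),
    (Order.IsSuccLimit α → ConvTo seq.t seq.pos α (seq.t α)) ∧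
    ∃ β₀ ≤ α, ∃ q : List ℕ,
      (∀ β, β₀ ≤ β → β < α → q <+: seq.pos β ∨ ¬ seq.pos β <+: q) ∧
      subtermAt q (seq.t β₀) = some u ∧ subtermAt q (seq.t α) = some v

lemma ProjRed.of_SCRed {Q : TRel Sg X} {s t : Tm Sg X} (h : SCRed Q s t) : ProjRed Q s t := by
  obtain ⟨α, seq, h0, hα, hconv⟩ := h
  exact ⟨α, seq, hα ▸ hconv, 0, (zero_le : (0 : Ordinal.{0}) ≤ α), [],
    fun _ _ _ => Or.inl List.nil_prefix, by rw [subtermAt_nil, h0], by rw [subtermAt_nil, hα]⟩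

lemma ProjRed.of_stepAt {Q : TRel Sg X} {p : List ℕ} {u v : Tm Sg X} (h : StepAt Q p u v) :
    ProjRed Q u v :=
  ProjRed.of_SCRed ⟨1, TransSeq.single h, by simp [TransSeq.single], by simp [TransSeq.single],
    fun hlim => absurd hlim (by simpa using Order.not_isSuccLimit_succ (0 : Ordinal.{0}))⟩

section ieqHom

variable {R : TRS Sg X} {P Q : TRel Sg X}

lemma ieqHom_of_liftRel {s t : Tm Sg X} (h : liftRel P s t) : ieqHom R P s t :=
  ReflTransGen.single (Or.inr (Or.inr h))

lemma ieqHom_equivalence (hPsymm : ∀ a b, P a b → P b a) : Equivalence (ieqHom R P) := by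
  refine ⟨fun _ => ReflTransGen.refl, fun h => ?_, ReflTransGen.trans⟩
  have : Std.Symm (fun s t => RootStep R t s ∨ RootStep R s t ∨ liftRel P s t) := ⟨by
    rintro a b (h | h | rfl | ⟨f, ss, ts, rfl, rfl, hargs⟩)
    · exact Or.inr (Or.inl h)
    · exact Or.inl h
    · exact Or.inr (Or.inr (Or.inl rfl))
    · exact Or.inr (Or.inr (Or.inr ⟨f, ts, ss, rfl, rfl, fun i => hPsymm _ _ (hargs i)⟩))⟩
  exact ReflTransGen.stdSymm.symm _ _ h

lemma eqvGen_le_ieqHom (hPsymm : ∀ a b, P a b → P b a) (hQ : Q ≤ ieqHom R P) :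
    EqvGen Q ≤ ieqHom R P :=
  fun _ _ h => (ieqHom_equivalence hPsymm).eqvGen_iff.mp (EqvGen.mono hQ _ _ h)

lemma ieqHom_of_stepAt (hQ : Q ≤ ieqHom R P)
    (hP : ∀ p u v, StepAt Q p u v → P u v) (hPrefl : ∀ u, P u u)
    {p : List ℕ} {u v : Tm Sg X} (h : StepAt Q p u v) : ieqHom R P u v := by
  cases h with
  | here hq => exact hQ _ _ hq
  | @deeper f ss ts i p' hst hoth =>
    refine ieqHom_of_liftRel (Or.inr ⟨f, ss, ts, rfl, rfl, fun j => ?_⟩)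
    by_cases hj : j = i
    · exact hj ▸ hP _ _ _ hst
    · exact hoth j hj ▸ hPrefl _

/-- At a limit stage, the subterm at `q` agrees at the root with the limit from some stage on,
and its arguments are related in `ProjRed Q` by the same reduction observed at depth
`q.length + 1`. -/
theorem ieqHom_of_projRed (hQ : Q ≤ ieqHom R P) (hP : ProjRed Q ≤ P) (hPrefl : ∀ u, P u u)
    {u v : Tm Sg X} (h : ProjRed Q u v) : ieqHom R P u v := by
  obtain ⟨α, seq, hconv, β₀, hβ₀, q, hq, hu, hv⟩ := h
  induction α using WellFoundedLT.induction generalizing u v β₀ with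
  | _ α IH =>
  have IH' : ∀ γ < α, β₀ ≤ γ → ∀ {v}, subtermAt q (seq.t γ) = some v → ieqHom R P u v :=
    fun γ hγ hβ₀γ _ hv' => IH γ hγ (seq.restrict γ hγ.le) (seq.conv γ hγ) β₀ hβ₀γ
      (fun β hβ hβγ => hq β hβ (hβγ.trans hγ)) hu hv'
  rcases hβ₀.eq_or_lt with rfl | hβ₀α
  · obtain rfl := Option.some.inj (hu.symm.trans hv)
    exact ReflTransGen.refl
  rcases Ordinal.zero_or_succ_or_isSuccLimit α with rfl | ⟨γ, rfl⟩ | hlim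
  · simp at hβ₀α
  · have hγ := Order.lt_succ γ
    have hβ₀γ : β₀ ≤ γ := Order.lt_succ_iff.mp hβ₀α
    have hstep := seq.step γ hγ
    rw [← Order.succ_eq_add_one] at hstep
    by_cases hqp : q <+: seq.pos γ
    · obtain ⟨p', hp'⟩ := hqp
      obtain ⟨u', v', hu', hv', hstep'⟩ := StepAt.exists_subtermAt_of_append (hp' ▸ hstep)
      obtain rfl := Option.some.inj (hv'.symm.trans hv)
      exact (IH' γ hγ hβ₀γ hu').trans (ieqHom_of_stepAt hQ
        (fun _ _ _ h => hP _ _ (ProjRed.of_stepAt h)) hPrefl hstep')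
    · exact IH' γ hγ hβ₀γ ((hstep.subtermAt_eq_of_not_prefix hqp
        ((hq γ hβ₀γ hγ).resolve_left hqp)).trans hv)
  · obtain ⟨β₁, hβ₀β₁, hβ₁α, hdeep, u₁, hu₁, hroot⟩ :=
      (hconv hlim).exists_subtermAt_agree hβ₀α hv
    refine (IH' β₁ hβ₁α hβ₀β₁ hu₁).trans ?_
    rcases hroot with ⟨x, rfl, rfl⟩ | ⟨f, ss, ts, rfl, rfl, -⟩
    · exact ReflTransGen.refl
    refine ieqHom_of_liftRel (Or.inr ⟨f, ss, ts, rfl, rfl, fun i => hP _ _ ?_⟩)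
    refine ⟨α, seq, hconv, β₁, hβ₁α.le, q ++ [(i : ℕ)],
      fun β hβ hβα => List.prefix_or_not_prefix_of_length_le (by simpa using hdeep β hβ hβα),
      ?_, ?_⟩ <;> simp [subtermAt_append, hu₁, hv]

end ieqHom

def SEProj (R : TRS Sg X) : TRel Sg X := fun u v => ∃ n, ProjRed (EqvGen (SEiter R n)) u v

lemma SEProj_of_SEiter {R : TRS Sg X} {n : ℕ} {s t : Tm Sg X} (h : SEiter R n s t) :
    SEProj R s t := by
  cases n with
  | zero =>
    obtain ⟨p, hp⟩ := h
    exact ⟨0, ProjRed.of_stepAt (Q := EqvGen (SEiter R 0)) (.here (EqvGen.rel _ _ ⟨p, hp⟩))⟩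
  | succ n => exact ⟨n, ProjRed.of_SCRed h⟩

lemma SEiter_le_ieqHom (R : TRS Sg X) (n : ℕ) :
    SEiter R n ≤ ieqHom R (EqvGen (SEProj R)) := by
  induction n with
  | zero =>
    rintro s t ⟨p, hp⟩
    exact ieqHom_of_stepAt (fun _ _ h => ReflTransGen.single (Or.inr (Or.inl h)))
      (fun p u v h => EqvGen.rel _ _ (SEProj_of_SEiter (n := 0) ⟨p, h⟩)) EqvGen.refl hp
  | succ n ih =>
    intro s t h
    exact ieqHom_of_projRed (eqvGen_le_ieqHom EqvGen.symm ih)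
      (fun _ _ h => EqvGen.rel _ _ ⟨n, h⟩) EqvGen.refl (ProjRed.of_SCRed h)

lemma eqvGen_SEProj_le_ieq (R : TRS Sg X) : EqvGen (SEProj R) ≤ ieq R := by
  refine OrderHom.le_gfp _ (eqvGen_le_ieqHom EqvGen.symm ?_)
  rintro u v ⟨n, huv⟩
  exact ieqHom_of_projRed
    (eqvGen_le_ieqHom EqvGen.symm (SEiter_le_ieqHom R n))
    (fun _ _ h => EqvGen.rel _ _ ⟨n, h⟩) EqvGen.refl huv

theorem SERel_subset_ieq_general (Sg : Signature) (X : Type) (R : TRS Sg X) :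
    ∀ s t, SERel R s t → ieq R s t := by
  rintro s t ⟨n, h⟩
  exact eqvGen_SEProj_le_ieq R s t (EqvGen.rel _ _ (SEProj_of_SEiter h))

/-- For every TRS `R`, Kahrs's relation `S_E(→)` is included in the
infinitary equational reasoning relation: `S_E(→) ⊆ =∞`. -/
theorem SERel_subset_ieq (Sg : Signature) (X : Type) [Infinite X] (R : TRS Sg X) :
    ∀ s t, SERel R s t → ieq R s t :=
  SERel_subset_ieq_general Sg X R
end
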